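/- Assume d ≥ 1 and 2 + 4/d < p + 1 < 2*. Let ψ₀ ∈ PW₋ and let ψ be the corresponding H¹ solution of 2i∂ₜψ + Δψ + |ψ|^{p−1}ψ = 0. Then 𝒦(ψ(t)) < −(ℬ(ψ₀) − ℋ(ψ₀)) < 0 for all t in the maximal existence interval; in particular ψ(t) stays in PW₋. -/

import Mathlib

open MeasureTheory Filter Set
open scoped ENNReal Topology

noncomputable section

abbrev Euc (d : ℕ) := EuclideanSpace ℝ (Fin d)

def gradSq (d : ℕ) (f : Euc d → ℂ) : ℝ := ∫ x, ‖fderiv ℝ f x‖ ^ 2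

def ppow (d : ℕ) (q : ℝ) (f : Euc d → ℂ) : ℝ := ∫ x, ‖f x‖ ^ q

def l2norm (d : ℕ) (f : Euc d → ℂ) : ℝ := Real.sqrt (ppow d 2 f)

def InH1 (d : ℕ) (f : Euc d → ℂ) : Prop :=
  MemLp f 2 (volume : Measure (Euc d)) ∧ Differentiable ℝ f ∧
    Integrable (fun x => ‖fderiv ℝ f x‖ ^ 2) (volume : Measure (Euc d))

def Hfun (d : ℕ) (p : ℝ) (f : Euc d → ℂ) : ℝ :=
  gradSq d f - (2 / (p + 1)) * ppow d (p + 1) f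

def Kfun (d : ℕ) (p : ℝ) (f : Euc d → ℂ) : ℝ :=
  gradSq d f - ((d : ℝ) * (p - 1) / (2 * (p + 1))) * ppow d (p + 1) f

def Adm (d : ℕ) (p : ℝ) (f : Euc d → ℂ) : Prop :=
  InH1 d f ∧ MemLp f (ENNReal.ofReal (p + 1)) (volume : Measure (Euc d)) ∧
    ¬ (f =ᵐ[(volume : Measure (Euc d))] (0 : Euc d → ℂ))

def N2fun (d : ℕ) (p : ℝ) (f : Euc d → ℂ) : ℝ :=
  l2norm d f ^ (p + 1 - (d : ℝ) * (p - 1) / 2) *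
    Real.sqrt (gradSq d f) ^ ((d : ℝ) * (p - 1) / 2 - 2)

def N2val (d : ℕ) (p : ℝ) : ℝ :=
  sInf {r : ℝ | ∃ f : Euc d → ℂ, Adm d p f ∧ Kfun d p f ≤ 0 ∧ r = N2fun d p f}

def Bfun (d : ℕ) (p : ℝ) (f : Euc d → ℂ) : ℝ :=
  (((d : ℝ) * (p - 1) - 4) / ((d : ℝ) * (p - 1))) *
    (N2val d p / l2norm d f ^ (p + 1 - (d : ℝ) * (p - 1) / 2)) ^ (4 / ((d : ℝ) * (p - 1) - 4))

/-!
Write `β = d(p-1) > 4`. For `f` with `𝒦(f) ≤ 0`, the infimum defining `N₂` gives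
`N₂ ≤ ‖f‖₂^{p+1-β/2} ‖∇f‖₂^{β/2-2}`, which rearranges to `β ℬ(f) ≤ (β-4) ‖∇f‖₂²`. Combined with
the identity `β ℋ = (β-4) ‖∇f‖₂² + 4 𝒦` this yields `4 𝒦(f) ≤ β (ℋ(f) - ℬ(f))`, hence
`𝒦(f) < ℋ(f) - ℬ(f)` as soon as `ℋ(f) < ℬ(f)`. Along the flow `ℋ` and `ℬ` (which depends on `f`
only through its mass) are conserved, so by continuity `𝒦(ψ(t))` can never reach `ℋ(ψ₀) - ℬ(ψ₀)`.
-/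


section

variable {d : ℕ} {p : ℝ}

lemma gradSq_nonneg (f : Euc d → ℂ) : 0 ≤ gradSq d f :=
  integral_nonneg fun _ => by positivity

lemma N2fun_nonneg (f : Euc d → ℂ) : 0 ≤ N2fun d p f :=
  mul_nonneg (Real.rpow_nonneg (Real.sqrt_nonneg _) _) (Real.rpow_nonneg (Real.sqrt_nonneg _) _)

lemma ppow_pos_iff {q : ℝ} (hq : 0 < q) {f : Euc d → ℂ}
    (hf : MemLp f (ENNReal.ofReal q) volume) :
    0 < ppow d q f ↔ ¬ f =ᵐ[volume] 0 := by
  have hnonneg : 0 ≤ fun x => ‖f x‖ ^ q := fun _ => by positivity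
  have hint : Integrable (fun x => ‖f x‖ ^ q) volume :=
    hf.integrable_norm_rpow (by simpa using hq) ENNReal.ofReal_ne_top |>.congr
      (.of_forall fun x => by rw [ENNReal.toReal_ofReal hq.le])
  have hzero : (fun x => ‖f x‖ ^ q) =ᵐ[volume] 0 ↔ f =ᵐ[volume] 0 :=
    eventually_congr <| .of_forall fun x => by simp [Real.rpow_eq_zero (norm_nonneg _) hq.ne']
  rw [← hzero, ← integral_eq_zero_iff_of_nonneg hnonneg hint, ppow,
    (integral_nonneg hnonneg).lt_iff_ne']

lemma Bfun_eq_of_ppow_two_eq {f g : Euc d → ℂ} (h : ppow d 2 f = ppow d 2 g) :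
    Bfun d p f = Bfun d p g := by
  simp only [Bfun, l2norm, h]

lemma N2val_nonneg : 0 ≤ N2val d p :=
  Real.sInf_nonneg fun _ ⟨f, _, _, hr⟩ => hr ▸ N2fun_nonneg f

lemma N2val_le_N2fun {f : Euc d → ℂ} (hf : Adm d p f) (hK : Kfun d p f ≤ 0) :
    N2val d p ≤ N2fun d p f :=
  csInf_le ⟨0, fun _ ⟨g, _, _, hr⟩ => hr ▸ N2fun_nonneg g⟩ ⟨f, hf, hK, rfl⟩

lemma N2fun_eq_mul_gradSq_rpow (f : Euc d → ℂ) :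
    N2fun d p f =
      l2norm d f ^ (p + 1 - d * (p - 1) / 2) * gradSq d f ^ ((d * (p - 1) - 4) / 4) := by
  rw [N2fun, Real.sqrt_eq_rpow, ← Real.rpow_mul (gradSq_nonneg f)]
  ring_nf

lemma mul_Hfun_eq (f : Euc d → ℂ) :
    d * (p - 1) * Hfun d p f = (d * (p - 1) - 4) * gradSq d f + 4 * Kfun d p f := by
  simp only [Hfun, Kfun, div_eq_mul_inv, mul_inv]
  ring

lemma mul_Bfun_le_gradSq (hβ : 4 < (d : ℝ) * (p - 1)) {f : Euc d → ℂ} (hf : Adm d p f)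
    (hK : Kfun d p f ≤ 0) :
    d * (p - 1) * Bfun d p f ≤ (d * (p - 1) - 4) * gradSq d f := by
  set β : ℝ := d * (p - 1)
  set M := l2norm d f ^ (p + 1 - β / 2)
  have hM : 0 < M :=
    Real.rpow_pos_of_pos (Real.sqrt_pos.mpr ((ppow_pos_iff two_pos (by simpa using hf.1.1)).mpr
      hf.2.2)) _
  have hβ4 : 0 < β - 4 := by linarith
  have hN2 : N2val d p / M ≤ gradSq d f ^ ((β - 4) / 4) := by
    rw [div_le_iff₀' hM, ← N2fun_eq_mul_gradSq_rpow]
    exact N2val_le_N2fun hf hK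
  have hC : (N2val d p / M) ^ (4 / (β - 4)) ≤ gradSq d f := by
    calc (N2val d p / M) ^ (4 / (β - 4))
        ≤ (gradSq d f ^ ((β - 4) / 4)) ^ (4 / (β - 4)) :=
          Real.rpow_le_rpow (div_nonneg N2val_nonneg hM.le) hN2 (by positivity)
      _ = gradSq d f := by
          rw [← Real.rpow_mul (gradSq_nonneg f),
            div_mul_div_cancel₀ (four_ne_zero' ℝ), div_self hβ4.ne', Real.rpow_one]
  calc β * Bfun d p f = (β - 4) * (N2val d p / M) ^ (4 / (β - 4)) := by
        rw [Bfun, ← mul_assoc, mul_div_cancel₀ _ (by positivity : β ≠ 0)]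
    _ ≤ (β - 4) * gradSq d f := mul_le_mul_of_nonneg_left hC hβ4.le

lemma Kfun_lt_Hfun_sub_Bfun (hβ : 4 < (d : ℝ) * (p - 1)) {f : Euc d → ℂ} (hf : Adm d p f)
    (hK : Kfun d p f ≤ 0) (hHB : Hfun d p f < Bfun d p f) :
    Kfun d p f < Hfun d p f - Bfun d p f := by
  have h4K : 4 * Kfun d p f ≤ d * (p - 1) * (Hfun d p f - Bfun d p f) := by
    linarith [mul_Bfun_le_gradSq hβ hf hK, mul_Hfun_eq (p := p) f]
  linarith [mul_lt_mul_of_neg_right hβ (sub_neg.mpr hHB)]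

end

lemma Set.OrdConnected.forall_lt_of_ne {I : Set ℝ} (hI : I.OrdConnected) {g : ℝ → ℝ}
    (hg : ContinuousOn g I) {a c : ℝ} (ha : a ∈ I) (hga : g a < c) (hne : ∀ s ∈ I, g s ≠ c) :
    ∀ t ∈ I, g t < c := by
  intro t ht
  by_contra! hct
  obtain ⟨s, hs, hgs⟩ := hI.isPreconnected.intermediate_value ha ht hg ⟨hga.le, hct⟩
  exact hne s hs hgs

theorem PWminus_invariant_general (d : ℕ) (p : ℝ) (hd : 1 ≤ d)
    (hp1 : 2 + 4 / (d : ℝ) < p + 1)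
    (I : Set ℝ) (hI0 : (0 : ℝ) ∈ I) (hIconn : I.OrdConnected)
    (ψ : ℝ → Euc d → ℂ)
    (hH1 : ∀ t ∈ I, InH1 d (ψ t))
    (hmemp : ∀ t ∈ I, MemLp (ψ t) (ENNReal.ofReal (p + 1)) (volume : Measure (Euc d)))
    (hne : ¬ ((ψ 0) =ᵐ[(volume : Measure (Euc d))] (0 : Euc d → ℂ)))
    (hmass : ∀ t ∈ I, ppow d 2 (ψ t) = ppow d 2 (ψ 0))
    (henergy : ∀ t ∈ I, Hfun d p (ψ t) = Hfun d p (ψ 0))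
    (hcont : ContinuousOn (fun t => Kfun d p (ψ t)) I)
    (hPW : Hfun d p (ψ 0) < Bfun d p (ψ 0))
    (hK0 : Kfun d p (ψ 0) < 0) :
    ∀ t ∈ I,
      Kfun d p (ψ t) < -(Bfun d p (ψ 0) - Hfun d p (ψ 0)) ∧
      0 < Bfun d p (ψ 0) - Hfun d p (ψ 0) ∧
      Hfun d p (ψ t) < Bfun d p (ψ t) := by
  have hβ : 4 < (d : ℝ) * (p - 1) := by
    have hd0 : (0 : ℝ) < d := by exact_mod_cast hd
    exact (div_lt_iff₀' hd0).mp (by linarith)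
  have hL2 : ∀ t ∈ I, MemLp (ψ t) (ENNReal.ofReal 2) volume := fun t ht => by
    simpa using (hH1 t ht).1
  have hAdm : ∀ t ∈ I, Adm d p (ψ t) := fun t ht =>
    ⟨hH1 t ht, hmemp t ht, (ppow_pos_iff two_pos (hL2 t ht)).mp
      (hmass t ht ▸ (ppow_pos_iff two_pos (hL2 0 hI0)).mpr hne)⟩
  have hHB : ∀ t ∈ I, Hfun d p (ψ t) < Bfun d p (ψ t) := fun t ht => by
    rwa [henergy t ht, Bfun_eq_of_ppow_two_eq (hmass t ht)]
  have hKt : ∀ t ∈ I, Kfun d p (ψ t) ≤ 0 →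
      Kfun d p (ψ t) < -(Bfun d p (ψ 0) - Hfun d p (ψ 0)) := fun t ht hK => by
    have := Kfun_lt_Hfun_sub_Bfun hβ (hAdm t ht) hK (hHB t ht)
    rwa [henergy t ht, Bfun_eq_of_ppow_two_eq (hmass t ht), ← neg_sub] at this
  have hε : 0 < Bfun d p (ψ 0) - Hfun d p (ψ 0) := sub_pos.mpr hPW
  refine fun t ht => ⟨?_, hε, hHB t ht⟩
  refine hIconn.forall_lt_of_ne hcont hI0 (hKt 0 hI0 hK0.le) (fun s hs hKs => ?_) t ht
  exact (hKt s hs (by linarith)).ne hKs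

/-- invariance of `PW₋`: if `ψ₀ ∈ PW₋` (i.e. `ℋ(ψ₀) < ℬ(ψ₀)` and
`𝒦(ψ₀) < 0`) and `ψ` is the corresponding `H¹` solution of
`2i∂ₜψ + Δψ + |ψ|^{p−1}ψ = 0` on its maximal interval `I` (recorded through mass and
energy conservation and continuity of `t ↦ 𝒦(ψ(t))` on `I ∋ 0`), then
`𝒦(ψ(t)) < −(ℬ(ψ₀) − ℋ(ψ₀)) < 0` for all `t ∈ I`; in particular `ψ(t)` stays in
`PW₋`. -/
theorem PWminus_invariant (d : ℕ) (p : ℝ) (hd : 1 ≤ d)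
    (hp1 : 2 + 4 / (d : ℝ) < p + 1)
    (hp2 : 3 ≤ d → p + 1 < 2 * (d : ℝ) / ((d : ℝ) - 2))
    (I : Set ℝ) (hI0 : (0 : ℝ) ∈ I) (hIconn : I.OrdConnected)
    (ψ : ℝ → Euc d → ℂ)
    (hH1 : ∀ t ∈ I, InH1 d (ψ t))
    (hmemp : ∀ t ∈ I, MemLp (ψ t) (ENNReal.ofReal (p + 1)) (volume : Measure (Euc d)))
    (hne : ¬ ((ψ 0) =ᵐ[(volume : Measure (Euc d))] (0 : Euc d → ℂ)))
    (hmass : ∀ t ∈ I, ppow d 2 (ψ t) = ppow d 2 (ψ 0))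
    (henergy : ∀ t ∈ I, Hfun d p (ψ t) = Hfun d p (ψ 0))
    (hcont : ContinuousOn (fun t => Kfun d p (ψ t)) I)
    (hPW : Hfun d p (ψ 0) < Bfun d p (ψ 0))
    (hK0 : Kfun d p (ψ 0) < 0) :
    ∀ t ∈ I,
      Kfun d p (ψ t) < -(Bfun d p (ψ 0) - Hfun d p (ψ 0)) ∧
      0 < Bfun d p (ψ 0) - Hfun d p (ψ 0) ∧
      Hfun d p (ψ t) < Bfun d p (ψ t) :=
  PWminus_invariant_general d p hd hp1 I hI0 hIconn ψ hH1 hmemp hne hmass henergy hcont hPW hK0
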